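/- arXiv:2305.03904 — 3 statements merged into one kernel-verified Lean document; each statement's English description precedes it below -/
import Mathlib

section
/- Let H_λ be the linearized Hamiltonian H_λ f = -f'' - f'/r + (k²/r²)·cos(2 I_λ)·f, and let A_λ f = -f' + (k/r)·cos(I_λ)·f with formal adjoint A_λ* g = g' + g/r + (k/r)·cos(I_λ)·g. Then for every twice differentiable f on (0,∞), H_λ f = A_λ*(A_λ f), using the identity r·(d/dr)[cos(I_λ)] = -k·sin²(I_λ) (which follows from r I_λ' = k sin I_λ). -/
/-- The rescaled profile `I_λ`. -/
noncomputable def Ilam (k : ℕ) (lam : ℝ) (r : ℝ) : ℝ := 2 * Real.arctan ((lam * r) ^ k)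

/-- The first order operator `A_λ`. -/
noncomputable def Aop (k : ℕ) (lam : ℝ) (f : ℝ → ℝ) (r : ℝ) : ℝ :=
  -(deriv f r) + ((k : ℝ) / r) * Real.cos (Ilam k lam r) * f r

/-- The formal adjoint `A_λ*`. -/
noncomputable def AopStar (k : ℕ) (lam : ℝ) (g : ℝ → ℝ) (r : ℝ) : ℝ :=
  deriv g r + g r / r + ((k : ℝ) / r) * Real.cos (Ilam k lam r) * g r

/-- The linearized Hamiltonian `H_λ`. -/
noncomputable def Hop (k : ℕ) (lam : ℝ) (f : ℝ → ℝ) (r : ℝ) : ℝ :=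
  -(deriv (deriv f) r) - deriv f r / r + ((k : ℝ) ^ 2 / r ^ 2) * Real.cos (2 * Ilam k lam r) * f r

lemma sin_Ilam (k : ℕ) (lam r : ℝ) :
    Real.sin (Ilam k lam r) = 2 * (lam*r)^k / (1 + ((lam*r)^k)^2) := by
  unfold Ilam
  rw [Real.sin_two_mul, Real.sin_arctan, Real.cos_arctan]
  field_simp
  rw [Real.sq_sqrt (by positivity)]

lemma hasDerivAt_cosI (k : ℕ) (hk : 1 ≤ k) (lam r : ℝ) (hr : 0 < r) :
    HasDerivAt (fun x => Real.cos (Ilam k lam x))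
      (-(k:ℝ) * (Real.sin (Ilam k lam r))^2 / r) r := by
  have hpow : (lam*r)^(k-1) * (lam*r) = (lam*r)^k := by
    rw [← pow_succ]; congr 1; omega
  have hu : HasDerivAt (fun x : ℝ => (lam*x)^k) ((k:ℝ) * (lam*r)^k / r) r := by
    have h1 : HasDerivAt (fun x : ℝ => lam*x) lam r := by
      simpa using (hasDerivAt_id r).const_mul lam
    have := h1.pow k
    refine this.congr_deriv ?_
    rw [eq_div_iff hr.ne', ← hpow]
    nlinarith [hpow]
  have hI : HasDerivAt (fun x => Ilam k lam x)
      (2 * (1/(1+((lam*r)^k)^2) * ((k:ℝ) * (lam*r)^k / r))) r := by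
    have := ((Real.hasDerivAt_arctan ((lam*r)^k)).comp r hu).const_mul 2
    simpa [Ilam, mul_comm, mul_assoc] using this
  have hc := hI.cos
  convert hc using 1
  rw [sin_Ilam]
  have h2 : (0:ℝ) < 1 + ((lam*r)^k)^2 := by positivity
  field_simp

theorem stmt_4 (k : ℕ) (hk : 1 ≤ k) (lam : ℝ) (hlam : 0 < lam) (f : ℝ → ℝ)
    (hf : ∀ r > (0 : ℝ), DifferentiableAt ℝ f r)
    (hf' : ∀ r > (0 : ℝ), DifferentiableAt ℝ (deriv f) r) :
    ∀ r > (0 : ℝ), Hop k lam f r = AopStar k lam (Aop k lam f) r := by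
  intro r hr
  set c := Real.cos (Ilam k lam r) with hcdef
  set s := Real.sin (Ilam k lam r) with hsdef
  have hg : HasDerivAt (fun x : ℝ => (k:ℝ)/x) (-(k:ℝ)/r^2) r := by
    have := (hasDerivAt_inv hr.ne').const_mul (k:ℝ)
    simpa [div_eq_mul_inv, neg_div] using this
  have hcI := hasDerivAt_cosI k hk lam r hr
  have hA : HasDerivAt (Aop k lam f)
      (-(deriv (deriv f) r) +
        ((-(k:ℝ)/r^2 * c + (k:ℝ)/r * (-(k:ℝ) * s^2 / r)) * f r
          + (k:ℝ)/r * c * deriv f r)) r := by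
    have h1 : HasDerivAt (fun x => -(deriv f x)) (-(deriv (deriv f) r)) r :=
      ((hf' r hr).hasDerivAt).neg
    have h2 := ((hg.mul hcI).mul (hf r hr).hasDerivAt)
    have := h1.add h2
    convert this using 1 <;> rfl
  have hAd : deriv (Aop k lam f) r = -(deriv (deriv f) r) +
        ((-(k:ℝ)/r^2 * c + (k:ℝ)/r * (-(k:ℝ) * s^2 / r)) * f r
          + (k:ℝ)/r * c * deriv f r) := hA.deriv
  have hs2 : s^2 = 1 - c^2 := Real.sin_sq _
  have hcos2 : Real.cos (2 * Ilam k lam r) = 2*c^2 - 1 := by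
    rw [Real.cos_two_mul]
  simp only [Hop, AopStar, hAd, hcos2, Aop, ← hcdef, hs2]
  field_simp
  ring
end

section
/- The conjugate potential V_λ(r) = (k²+1)/r² + (2k/r²)·cos(I_λ(r)) satisfies the spatial repulsivity bound -V_λ'(r) ≥ 2(k-1)²/r³ for all r > 0. -/
theorem stmt_6 (k : ℕ) (hk : 1 ≤ k) (lam : ℝ) (hlam : 0 < lam) (r : ℝ) (hr : 0 < r) :
    -(deriv (fun s : ℝ =>
        ((k : ℝ) ^ 2 + 1) / s ^ 2 + (2 * k / s ^ 2) * Real.cos (2 * Real.arctan ((lam * s) ^ k))) r)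
      ≥ 2 * ((k : ℝ) - 1) ^ 2 / r ^ 3 := by
  have hr2 : (r : ℝ) ^ 2 ≠ 0 := by positivity
  set u : ℝ := (lam * r) ^ k with hu
  have hu0 : 0 ≤ u := by positivity
  set P : ℝ := (k : ℝ) * (lam * r) ^ (k - 1) * lam with hP
  have hP0 : 0 ≤ P := by positivity
  have hw : (0 : ℝ) < 1 + u ^ 2 := by positivity
  have hlin : HasDerivAt (fun s : ℝ => lam * s) lam r := by
    simpa using (hasDerivAt_id r).const_mul lam
  have hpow : HasDerivAt (fun s : ℝ => (lam * s) ^ k) P r := by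
    have := (hasDerivAt_pow k (lam * r)).comp r hlin
    simpa [hP, mul_comm, mul_assoc, mul_left_comm, Function.comp_def] using this
  have harctan : HasDerivAt (fun s : ℝ => 2 * Real.arctan ((lam * s) ^ k))
      (2 * ((1 / (1 + u ^ 2)) * P)) r := by
    exact ((Real.hasDerivAt_arctan u).comp r hpow).const_mul 2
  have hcos : HasDerivAt (fun s : ℝ => Real.cos (2 * Real.arctan ((lam * s) ^ k)))
      (-Real.sin (2 * Real.arctan u) * (2 * ((1 / (1 + u ^ 2)) * P))) r := harctan.cos
  have h1 : HasDerivAt (fun s : ℝ => ((k : ℝ) ^ 2 + 1) / s ^ 2)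
      ((0 * r ^ 2 - ((k : ℝ) ^ 2 + 1) * (2 * r ^ 1)) / (r ^ 2) ^ 2) r := by
    simpa [Pi.div_def] using (hasDerivAt_const r ((k : ℝ) ^ 2 + 1)).div (hasDerivAt_pow 2 r) hr2
  have h2 : HasDerivAt (fun s : ℝ => 2 * (k : ℝ) / s ^ 2)
      ((0 * r ^ 2 - 2 * (k : ℝ) * (2 * r ^ 1)) / (r ^ 2) ^ 2) r := by
    simpa [Pi.div_def] using (hasDerivAt_const r (2 * (k : ℝ))).div (hasDerivAt_pow 2 r) hr2
  have hV : HasDerivAt (fun s : ℝ =>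
      ((k : ℝ) ^ 2 + 1) / s ^ 2 + (2 * k / s ^ 2) * Real.cos (2 * Real.arctan ((lam * s) ^ k)))
      ((0 * r ^ 2 - ((k : ℝ) ^ 2 + 1) * (2 * r ^ 1)) / (r ^ 2) ^ 2 +
        ((0 * r ^ 2 - 2 * (k : ℝ) * (2 * r ^ 1)) / (r ^ 2) ^ 2 * Real.cos (2 * Real.arctan u) +
          2 * (k : ℝ) / r ^ 2 *
            (-Real.sin (2 * Real.arctan u) * (2 * ((1 / (1 + u ^ 2)) * P))))) r :=
    h1.add (h2.mul hcos)
  rw [hV.deriv]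
  -- bounds
  have hsin : 0 ≤ Real.sin (2 * Real.arctan u) := by
    apply Real.sin_nonneg_of_nonneg_of_le_pi
    · have h0 : Real.arctan 0 ≤ Real.arctan u := Real.arctan_strictMono.monotone hu0
      rw [Real.arctan_zero] at h0
      linarith
    · have h := Real.arctan_lt_pi_div_two u
      linarith
  have hcosb : -1 ≤ Real.cos (2 * Real.arctan u) := Real.neg_one_le_cos _
  have hT : 0 ≤ 2 * (k : ℝ) / r ^ 2 *
      (Real.sin (2 * Real.arctan u) * (2 * ((1 / (1 + u ^ 2)) * P))) := by positivity
  have e1 : (((k : ℝ) ^ 2 + 1) * (2 * r ^ 1)) / (r ^ 2) ^ 2 = 2 * ((k : ℝ) ^ 2 + 1) / r ^ 3 := by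
    field_simp
  have hc : (2 * (k : ℝ) * (2 * r ^ 1)) / (r ^ 2) ^ 2 * Real.cos (2 * Real.arctan u)
      ≥ -(4 * (k : ℝ) / r ^ 3) := by
    have hcoef : (0 : ℝ) ≤ 2 * (k : ℝ) * (2 * r ^ 1) / (r ^ 2) ^ 2 := by positivity
    have := mul_le_mul_of_nonneg_left hcosb hcoef
    have e2 : (2 * (k : ℝ) * (2 * r ^ 1)) / (r ^ 2) ^ 2 = 4 * (k : ℝ) / r ^ 3 := by
      field_simp; ring
    nlinarith
  have e3 : 2 * ((k : ℝ) ^ 2 + 1) / r ^ 3 - 4 * (k : ℝ) / r ^ 3 = 2 * ((k : ℝ) - 1) ^ 2 / r ^ 3 := by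
    field_simp
    ring
  have key : -((0 * r ^ 2 - ((k : ℝ) ^ 2 + 1) * (2 * r ^ 1)) / (r ^ 2) ^ 2 +
      ((0 * r ^ 2 - 2 * (k : ℝ) * (2 * r ^ 1)) / (r ^ 2) ^ 2 * Real.cos (2 * Real.arctan u) +
        2 * (k : ℝ) / r ^ 2 *
          (-Real.sin (2 * Real.arctan u) * (2 * ((1 / (1 + u ^ 2)) * P)))))
      = (((k : ℝ) ^ 2 + 1) * (2 * r ^ 1)) / (r ^ 2) ^ 2
        + (2 * (k : ℝ) * (2 * r ^ 1)) / (r ^ 2) ^ 2 * Real.cos (2 * Real.arctan u)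
        + 2 * (k : ℝ) / r ^ 2 *
          (Real.sin (2 * Real.arctan u) * (2 * ((1 / (1 + u ^ 2)) * P))) := by
    ring
  rw [key, e1]
  linarith [hT, hc, e3.ge]
end

section
/- Under the hypotheses of the Poincaré-type sup bound (u ∈ C¹, u(0)=0, A = ∫₀^∞ (u/r)² r dr < ∞, B = ∫₀^∞ (u')² r dr < ∞), one has ∫₀^∞ u(r)⁴/r dr ≤ 2·(∫₀^∞ (u(r)/r)² r dr)^{3/2}·(∫₀^∞ (u'(r))² r dr)^{1/2} ≤ 2(A+B)². In particular ∫₀^∞ u⁴/r dr ≤ 2 E₀², where E₀ = A + B. -/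
open MeasureTheory Set

theorem amgm_pt (ε a d x : ℝ) (hε : 0 < ε) (hx : 0 < x) :
    2 * (a * x) * d ≤ ε * a ^ 2 * x + ε⁻¹ * (d ^ 2 * x) := by
  have h1 : x * ε⁻¹ * (ε * a - d) ^ 2
      = ε * a ^ 2 * x + ε⁻¹ * (d ^ 2 * x) - 2 * (a * x) * d := by
    field_simp; ring
  nlinarith [mul_nonneg (mul_nonneg hx.le (inv_nonneg.2 hε.le)) (sq_nonneg (ε * a - d))]

theorem eps_opt (c A B : ℝ) (hA : 0 ≤ A) (hB : 0 ≤ B)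
    (h : ∀ ε : ℝ, 0 < ε → c ≤ ε * A + ε⁻¹ * B) :
    c ≤ 2 * Real.sqrt A * Real.sqrt B := by
  rcases eq_or_lt_of_le hA with hA0 | hA0
  · have hc : c ≤ 0 := by
      by_contra hc
      push_neg at hc
      rcases eq_or_lt_of_le hB with hB0 | hB0
      · have := h 1 one_pos
        simp [← hA0, ← hB0] at this; linarith
      · have h2 := h (2 * B / c) (by positivity)
        rw [← hA0, inv_div] at h2
        have h3 : c / (2 * B) * B = c / 2 := by field_simp
        simp only [mul_zero, zero_add] at h2
        rw [h3] at h2; linarith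
    have : 0 ≤ 2 * Real.sqrt A * Real.sqrt B := by positivity
    linarith
  · rcases eq_or_lt_of_le hB with hB0 | hB0
    · have hc : c ≤ 0 := by
        by_contra hc
        push_neg at hc
        have h2 := h (c / (2 * A)) (by positivity)
        rw [← hB0] at h2
        have h3 : c / (2 * A) * A = c / 2 := by field_simp
        simp only [mul_zero, add_zero] at h2
        rw [h3] at h2; linarith
      have : 0 ≤ 2 * Real.sqrt A * Real.sqrt B := by positivity
      linarith
    · have h2 := h (Real.sqrt B / Real.sqrt A) (by positivity)
      have e1 : Real.sqrt B / Real.sqrt A * A = Real.sqrt A * Real.sqrt B := by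
        rw [div_mul_eq_mul_div, mul_div_assoc, Real.div_sqrt, mul_comm]
      have e2 : (Real.sqrt B / Real.sqrt A)⁻¹ * B = Real.sqrt A * Real.sqrt B := by
        rw [inv_div, div_mul_eq_mul_div, mul_div_assoc, Real.div_sqrt]
      rw [e1, e2] at h2
      linarith

theorem sup_bound (u : ℝ → ℝ) (hu : ContDiffOn ℝ 1 u (Set.Ici 0)) (hu0 : u 0 = 0)
    (A B : ℝ)
    (hA : IntegrableOn (fun r : ℝ => (u r / r) ^ 2 * r) (Set.Ioi 0))
    (hB : IntegrableOn (fun r : ℝ => (deriv u r) ^ 2 * r) (Set.Ioi 0))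
    (hAdef : A = ∫ r in Set.Ioi (0 : ℝ), (u r / r) ^ 2 * r)
    (hBdef : B = ∫ r in Set.Ioi (0 : ℝ), (deriv u r) ^ 2 * r)
    (ε : ℝ) (hε : 0 < ε) (r : ℝ) (hr : 0 ≤ r) :
    u r ^ 2 ≤ ε * A + ε⁻¹ * B := by
  -- nonnegativity of A, B
  have hAnn : 0 ≤ A := hAdef ▸ setIntegral_nonneg measurableSet_Ioi
    (fun x hx => by have : (0:ℝ) < x := hx; positivity)
  have hBnn : 0 ≤ B := hBdef ▸ setIntegral_nonneg measurableSet_Ioi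
    (fun x hx => by have : (0:ℝ) < x := hx; positivity)
  rcases eq_or_lt_of_le hr with hr0 | hr0
  · have hrhs : 0 ≤ ε * A + ε⁻¹ * B := by
      have h1 := mul_nonneg hε.le hAnn
      have h2 := mul_nonneg (inv_nonneg.2 hε.le) hBnn
      linarith
    simpa [← hr0, hu0] using hrhs
  set g := derivWithin u (Set.Ici (0:ℝ)) with hg
  have hgc : ContinuousOn g (Set.Ici 0) :=
    hu.continuousOn_derivWithin (uniqueDiffOn_Ici 0) le_rfl
  have hderiv : ∀ x : ℝ, 0 < x → HasDerivAt u (deriv u x) x := by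
    intro x hx
    have hmem : Set.Ici (0:ℝ) ∈ nhds x := Ici_mem_nhds hx
    exact (((hu.differentiableOn one_ne_zero) x (le_of_lt hx)).differentiableAt hmem).hasDerivAt
  have hdg : ∀ x : ℝ, 0 < x → deriv u x = g x := by
    intro x hx
    exact (derivWithin_of_mem_nhds (Ici_mem_nhds hx)).symm
  -- FTC for u^2
  have hcont : ContinuousOn u (Set.Icc 0 r) := (hu.continuousOn).mono Icc_subset_Ici_self
  have hFcont : ContinuousOn (fun x => 2 * u x * g x) (Set.Icc 0 r) :=
    ((continuousOn_const.mul hcont).mul (hgc.mono Icc_subset_Ici_self))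
  have hInt : IntervalIntegrable (fun x => 2 * u x * deriv u x) volume 0 r := by
    rw [intervalIntegrable_iff_integrableOn_Ioc_of_le hr]
    refine (hFcont.integrableOn_compact isCompact_Icc |>.mono_set Ioc_subset_Icc_self).congr_fun
      ?_ measurableSet_Ioc
    intro x hx
    show 2 * u x * g x = 2 * u x * deriv u x
    rw [hdg x hx.1]
  have hftc : ∫ x in (0:ℝ)..r, 2 * u x * deriv u x = u r ^ 2 - u 0 ^ 2 := by
    apply intervalIntegral.integral_eq_sub_of_hasDerivAt_of_le hr
    · exact (hcont.pow 2)
    · intro x hx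
      have := ((hderiv x hx.1).fun_pow 2)
      simpa [mul_comm, mul_assoc, mul_left_comm] using this
    · exact hInt
  have hur : u r ^ 2 = ∫ x in Set.Ioc 0 r, 2 * u x * deriv u x := by
    rw [← intervalIntegral.integral_of_le hr, hftc, hu0]; ring
  -- bound the integral
  have hAint : IntegrableOn (fun x : ℝ => (u x / x) ^ 2 * x) (Set.Ioc 0 r) :=
    hA.mono_set Ioc_subset_Ioi_self
  have hBint : IntegrableOn (fun x : ℝ => (deriv u x) ^ 2 * x) (Set.Ioc 0 r) :=
    hB.mono_set Ioc_subset_Ioi_self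
  have hRHSint : IntegrableOn
      (fun x : ℝ => ε * ((u x / x) ^ 2 * x) + ε⁻¹ * ((deriv u x) ^ 2 * x)) (Set.Ioc 0 r) :=
    (hAint.const_mul ε).add (hBint.const_mul ε⁻¹)
  have hLint : IntegrableOn (fun x => 2 * u x * deriv u x) (Set.Ioc 0 r) := by
    have := hInt
    rwa [intervalIntegrable_iff_integrableOn_Ioc_of_le hr] at this
  have step1 : ∫ x in Set.Ioc 0 r, 2 * u x * deriv u x
      ≤ ∫ x in Set.Ioc 0 r, (ε * ((u x / x) ^ 2 * x) + ε⁻¹ * ((deriv u x) ^ 2 * x)) := by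
    apply setIntegral_mono_on hLint hRHSint measurableSet_Ioc
    intro x hx
    have hx0 : 0 < x := hx.1
    have hux : u x = (u x / x) * x := (div_mul_cancel₀ _ hx0.ne').symm
    calc 2 * u x * deriv u x = 2 * ((u x / x) * x) * deriv u x := by rw [← hux]
      _ ≤ ε * (u x / x) ^ 2 * x + ε⁻¹ * ((deriv u x) ^ 2 * x) := by
          have h1 : x * ε⁻¹ * (ε * (u x / x) - deriv u x) ^ 2
              = ε * (u x / x) ^ 2 * x + ε⁻¹ * ((deriv u x) ^ 2 * x)
                - 2 * ((u x / x) * x) * deriv u x := by field_simp; ring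
          nlinarith [mul_nonneg (mul_nonneg hx0.le (inv_nonneg.2 hε.le))
            (sq_nonneg (ε * (u x / x) - deriv u x))]
      _ = ε * ((u x / x) ^ 2 * x) + ε⁻¹ * ((deriv u x) ^ 2 * x) := by ring
  have step2 : ∫ x in Set.Ioc 0 r, (ε * ((u x / x) ^ 2 * x) + ε⁻¹ * ((deriv u x) ^ 2 * x))
      = ε * (∫ x in Set.Ioc 0 r, (u x / x) ^ 2 * x)
        + ε⁻¹ * (∫ x in Set.Ioc 0 r, (deriv u x) ^ 2 * x) := by
    rw [integral_add (hAint.const_mul ε) (hBint.const_mul ε⁻¹), integral_const_mul,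
      integral_const_mul]
  have hmonoA : ∫ x in Set.Ioc 0 r, (u x / x) ^ 2 * x ≤ A := by
    rw [hAdef]
    apply setIntegral_mono_set hA
    · filter_upwards [ae_restrict_mem measurableSet_Ioi] with x hx
      have : (0:ℝ) < x := hx; positivity
    · exact HasSubset.Subset.eventuallyLE Ioc_subset_Ioi_self
  have hmonoB : ∫ x in Set.Ioc 0 r, (deriv u x) ^ 2 * x ≤ B := by
    rw [hBdef]
    apply setIntegral_mono_set hB
    · filter_upwards [ae_restrict_mem measurableSet_Ioi] with x hx
      have : (0:ℝ) < x := hx; positivity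
    · exact HasSubset.Subset.eventuallyLE Ioc_subset_Ioi_self
  have h1 := mul_le_mul_of_nonneg_left hmonoA hε.le
  have h2 := mul_le_mul_of_nonneg_left hmonoB (inv_nonneg.2 hε.le)
  calc u r ^ 2 = ∫ x in Set.Ioc 0 r, 2 * u x * deriv u x := hur
    _ ≤ ∫ x in Set.Ioc 0 r, (ε * ((u x / x) ^ 2 * x) + ε⁻¹ * ((deriv u x) ^ 2 * x)) := step1
    _ = ε * (∫ x in Set.Ioc 0 r, (u x / x) ^ 2 * x)
        + ε⁻¹ * (∫ x in Set.Ioc 0 r, (deriv u x) ^ 2 * x) := step2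
    _ ≤ ε * A + ε⁻¹ * B := add_le_add h1 h2

theorem stmt_15 (u : ℝ → ℝ) (hu : ContDiffOn ℝ 1 u (Set.Ici 0)) (hu0 : u 0 = 0)
    (A B : ℝ)
    (hA : IntegrableOn (fun r : ℝ => (u r / r) ^ 2 * r) (Set.Ioi 0))
    (hB : IntegrableOn (fun r : ℝ => (deriv u r) ^ 2 * r) (Set.Ioi 0))
    (hAdef : A = ∫ r in Set.Ioi (0 : ℝ), (u r / r) ^ 2 * r)
    (hBdef : B = ∫ r in Set.Ioi (0 : ℝ), (deriv u r) ^ 2 * r) :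
    (∫ r in Set.Ioi (0 : ℝ), (u r) ^ 4 / r)
        ≤ 2 * A ^ ((3 : ℝ) / 2) * B ^ ((1 : ℝ) / 2) ∧
    2 * A ^ ((3 : ℝ) / 2) * B ^ ((1 : ℝ) / 2) ≤ 2 * (A + B) ^ 2 := by
  have hAnn : 0 ≤ A := hAdef ▸ setIntegral_nonneg measurableSet_Ioi
    (fun x hx => by have : (0:ℝ) < x := hx; positivity)
  have hBnn : 0 ≤ B := hBdef ▸ setIntegral_nonneg measurableSet_Ioi
    (fun x hx => by have : (0:ℝ) < x := hx; positivity)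
  set C := 2 * Real.sqrt A * Real.sqrt B with hC
  have hCnn : 0 ≤ C := by positivity
  have hsup : ∀ r : ℝ, 0 ≤ r → u r ^ 2 ≤ C :=
    fun r hr => eps_opt _ A B hAnn hBnn
      (fun ε hε => sup_bound u hu hu0 A B hA hB hAdef hBdef ε hε r hr)
  -- rewrite rpow expressions
  have hA32 : A ^ ((3 : ℝ) / 2) = A * Real.sqrt A := by
    rw [show (3 : ℝ) / 2 = 1 + 1 / 2 by norm_num, Real.rpow_add' hAnn (by norm_num),
      Real.rpow_one, ← Real.sqrt_eq_rpow]
  have hB12 : B ^ ((1 : ℝ) / 2) = Real.sqrt B := (Real.sqrt_eq_rpow B).symm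
  have hrpow : 2 * A ^ ((3 : ℝ) / 2) * B ^ ((1 : ℝ) / 2) = C * A := by
    rw [hA32, hB12, hC]; ring
  constructor
  · rw [hrpow]
    calc (∫ r in Set.Ioi (0 : ℝ), (u r) ^ 4 / r)
        ≤ ∫ r in Set.Ioi (0 : ℝ), C * ((u r / r) ^ 2 * r) := by
          apply integral_mono_of_nonneg
          · filter_upwards [ae_restrict_mem measurableSet_Ioi] with x hx
            have hx0 : (0:ℝ) < x := hx
            positivity
          · exact hA.const_mul C
          · filter_upwards [ae_restrict_mem measurableSet_Ioi] with x hx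
            have hx0 : (0:ℝ) < x := hx
            have he : u x ^ 4 / x = u x ^ 2 * ((u x / x) ^ 2 * x) := by
              field_simp
            rw [he]
            exact mul_le_mul_of_nonneg_right (hsup x hx0.le) (by positivity)
      _ = C * A := by rw [integral_const_mul, ← hAdef]
  · rw [hrpow, hC]
    have ha : A = Real.sqrt A ^ 2 := (Real.sq_sqrt hAnn).symm
    have hb : B = Real.sqrt B ^ 2 := (Real.sq_sqrt hBnn).symm
    set a := Real.sqrt A
    set b := Real.sqrt B
    have han : 0 ≤ a := Real.sqrt_nonneg _
    have hbn : 0 ≤ b := Real.sqrt_nonneg _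
    rw [ha, hb]
    nlinarith [sq_nonneg (a ^ 2 - a * b), sq_nonneg (a * b), sq_nonneg (a ^ 2),
      sq_nonneg (b ^ 2), mul_nonneg (mul_nonneg han han) (mul_nonneg hbn hbn)]
end
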